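/- arXiv:1210.6183 — 4 statements merged into one kernel-verified Lean document; each statement's English description precedes it below -/
import Mathlib

section
/- Let X be a connected simplicial graph with the simplicial metric, in which any chain S^1 ⊆ S^2 ⊆ ... ⊆ S^k of vertices (each consecutive pair joined by an 'inclusion' edge) implies that S^1 and S^k are joined by an edge. Then for any two vertices S and S', there exists a zig-zag path (a path alternating descents and ascents along inclusion edges, i.e. a concatenation of W-paths) from S to S' of length exactly 2^{k+1}, where k is a positive integer satisfying 2^k - 3 ≤ d(S,S') ≤ 2^{k+1}. -/
/-!
Follow a geodesic walk from `S` to `S'`: each edge is a comparability, and consecutive steps in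
the same direction merge by transitivity, so the walk of length `d = d(S, S')` becomes a zig-zag
of length at most `d + 1` (the extra step makes the first move a descent). Repeating `S'` pads
it to length `2 ^ (k + 1)`, where `2 ^ k ≤ d + 3 < 2 ^ (k + 1)`.
-/

open OrderDual

def HasZigZagPath {α : Type*} [LE α] (n : ℕ) (a b : α) : Prop :=
  ∃ γ : ℕ → α, γ 0 = a ∧ γ n = b ∧
    ∀ i < n, if i % 2 = 0 then γ (i + 1) ≤ γ i else γ i ≤ γ (i + 1)

namespace HasZigZagPath

variable {α : Type*} [Preorder α] {m n : ℕ} {a b v : α}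

theorem self (n : ℕ) (a : α) : HasZigZagPath n a a :=
  ⟨fun _ => a, rfl, rfl, fun i _ => by split_ifs <;> exact le_rfl⟩

theorem mono (h : HasZigZagPath n a b) (hnm : n ≤ m) : HasZigZagPath m a b := by
  obtain ⟨γ, h0, hn, hγ⟩ := h
  refine ⟨fun i => γ (min i n), by simpa using h0, by simpa [min_eq_right hnm] using hn,
    fun i _ => ?_⟩
  rcases lt_or_ge i n with hi | hi
  · simpa only [min_eq_left hi.le, min_eq_left (Nat.succ_le_of_lt hi)] using hγ i hi
  · simp only [min_eq_right hi, min_eq_right (hi.trans (Nat.le_succ i))]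
    split_ifs <;> exact le_rfl

theorem cons_of_le (h : HasZigZagPath (n + 1) v b) (hva : v ≤ a) :
    HasZigZagPath (n + 1) a b := by
  obtain ⟨γ, h0, hn, hγ⟩ := h
  refine ⟨Function.update γ 0 a, by simp, by simpa using hn, fun i hi => ?_⟩
  rcases i with _ | i
  · simpa using (hγ 0 (Nat.succ_pos n)).trans (h0 ▸ hva)
  · simpa using hγ (i + 1) hi

/-- Zig-zags for the dual order are those starting with an ascent; repeating the first vertex
switches the phase. -/
theorem toDual_succ (h : HasZigZagPath n a b) :
    HasZigZagPath (α := αᵒᵈ) (n + 1) (toDual a) (toDual b) := by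
  obtain ⟨γ, h0, hn, hγ⟩ := h
  refine ⟨fun i => toDual (Nat.casesOn i a γ), rfl, by simpa using hn, fun i hi => ?_⟩
  rcases i with _ | i
  · simp [h0]
  · have := hγ i (by omega)
    have hpar : (i + 1) % 2 = 0 ↔ ¬ i % 2 = 0 := by omega
    by_cases hi : i % 2 = 0 <;> simp_all [toDual_le_toDual]

end HasZigZagPath

theorem SimpleGraph.Walk.hasZigZagPath {V : Type*} [Preorder V] {G : SimpleGraph V}
    (hG : ∀ v w : V, G.Adj v w → v ≤ w ∨ w ≤ v) {a b : V} (p : G.Walk a b) :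
    HasZigZagPath (p.length + 1) a b ∧
      HasZigZagPath (α := Vᵒᵈ) (p.length + 1) (toDual a) (toDual b) := by
  induction p with
  | nil => exact ⟨.self _ _, .self _ _⟩
  | @cons a v b hav p ih =>
    rw [SimpleGraph.Walk.length_cons]
    rcases hG a v hav with hle | hle
    · have h := ih.2.cons_of_le (toDual_le_toDual.mpr hle)
      exact ⟨h.toDual_succ, h.mono (Nat.le_succ _)⟩
    · have h := ih.1.cons_of_le hle
      exact ⟨h.mono (Nat.le_succ _), h.toDual_succ⟩

/-- In a connected comparability graph of a partial order (where any two
comparable distinct vertices are adjacent, so monotone chains can be shortcut to single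
edges), any two vertices `S`, `S'` are joined by a zig-zag path (alternating descents and
ascents along inclusion edges, equalities allowed) of length exactly `2^(k+1)`, where
`k ≥ 1` satisfies `2^k - 3 ≤ d(S,S') ≤ 2^(k+1)`. -/
theorem stmt0 {V : Type*} [PartialOrder V] (G : SimpleGraph V)
    (hG : ∀ v w : V, G.Adj v w ↔ v ≠ w ∧ (v ≤ w ∨ w ≤ v))
    (hconn : G.Connected) (S S' : V) :
    ∃ k : ℕ, 1 ≤ k ∧ 2 ^ k - 3 ≤ G.dist S S' ∧ G.dist S S' ≤ 2 ^ (k + 1) ∧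
      ∃ γ : ℕ → V, γ 0 = S ∧ γ (2 ^ (k + 1)) = S' ∧
        ∀ i < 2 ^ (k + 1), if i % 2 = 0 then γ (i + 1) ≤ γ i else γ i ≤ γ (i + 1) := by
  obtain ⟨p, hp⟩ := hconn.exists_walk_length_eq_dist S S'
  have hzz := (p.hasZigZagPath fun v w h => ((hG v w).mp h).2).1
  set d := G.dist S S'
  set k := Nat.log 2 (d + 3)
  have hk : 1 ≤ k := Nat.log_pos one_lt_two (by omega)
  have hlow : 2 ^ k ≤ d + 3 := Nat.pow_log_le_self 2 (by omega)
  have hup : d + 3 < 2 ^ (k + 1) := Nat.lt_pow_succ_log_self (by norm_num) _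
  exact ⟨k, hk, by omega, by omega, hzz.mono (by omega)⟩
end

section
/- Let X be a connected graph with path metric d, let γ be a path in X, and let π be a projection to γ that is C-coarsely retracting and C-coarsely Lipschitz. Then for any vertex v of X and any index k in the domain of γ, the diameter of γ([π(v), k]) is at most C·(d(v, γ(k)) + 1) + C. -/
/-!
Follow a geodesic from `v` to `γ k`: each of its `d(v, γ k)` edges moves the projection by a
subpath of diameter at most `C`, and the retraction at `γ k` links `π (γ k)` to `k` by one more.
Diameters of overlapping index intervals add up by the triangle inequality through the common
endpoint.
-/

namespace SimpleGraph

variable {V : Type*} (G : SimpleGraph V)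

def SubpathDiamLE (γ : ℕ → V) (a b : ℕ) (C : ℝ) : Prop :=
  ∀ i ∈ Set.uIcc a b, ∀ j ∈ Set.uIcc a b, (G.dist (γ i) (γ j) : ℝ) ≤ C

variable {G} {γ : ℕ → V} {a b c : ℕ} {C C₁ C₂ : ℝ}

lemma subpathDiamLE_self (γ : ℕ → V) (a : ℕ) : G.SubpathDiamLE γ a a 0 := by
  intro i hi j hj
  simp only [Set.uIcc_self, Set.mem_singleton_iff] at hi hj
  simp [hi, hj]

lemma SubpathDiamLE.symm (h : G.SubpathDiamLE γ a b C) : G.SubpathDiamLE γ b a C := by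
  rwa [SubpathDiamLE, Set.uIcc_comm]

lemma SubpathDiamLE.mono (h : G.SubpathDiamLE γ a b C₁) (hC : C₁ ≤ C₂) :
    G.SubpathDiamLE γ a b C₂ :=
  fun i hi j hj => (h i hi j hj).trans hC

lemma SubpathDiamLE.nonneg (h : G.SubpathDiamLE γ a b C) : 0 ≤ C := by
  simpa using h a Set.left_mem_uIcc a Set.left_mem_uIcc

lemma SubpathDiamLE.trans (hconn : G.Connected) (h₁ : G.SubpathDiamLE γ a b C₁)
    (h₂ : G.SubpathDiamLE γ b c C₂) : G.SubpathDiamLE γ a c (C₁ + C₂) := by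
  have hC₁ := h₁.nonneg
  have hC₂ := h₂.nonneg
  have hb₁ : b ∈ Set.uIcc a b := Set.right_mem_uIcc
  have hb₂ : b ∈ Set.uIcc b c := Set.left_mem_uIcc
  intro i hi j hj
  have htri : (G.dist (γ i) (γ j) : ℝ) ≤ G.dist (γ i) (γ b) + G.dist (γ b) (γ j) := by
    exact_mod_cast hconn.dist_triangle
  rcases Set.uIcc_subset_uIcc_union_uIcc hi with hi | hi <;>
    rcases Set.uIcc_subset_uIcc_union_uIcc hj with hj | hj
  · linarith [h₁ i hi j hj]
  · linarith [h₁ i hi b hb₁, h₂ b hb₂ j hj]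
  · linarith [h₂ i hi b hb₂, h₁ b hb₁ j hj]
  · linarith [h₂ i hi j hj]

lemma Walk.subpathDiamLE_length_mul (hconn : G.Connected) {π : V → ℕ}
    (hLip : ∀ u w, G.Adj u w → G.SubpathDiamLE γ (π u) (π w) C) {v w : V} (p : G.Walk v w) :
    G.SubpathDiamLE γ (π v) (π w) (p.length * C) := by
  induction p with
  | nil => simpa using subpathDiamLE_self γ (π _)
  | cons hadj p ih =>
    refine ((hLip _ _ hadj).trans hconn ih).mono (le_of_eq ?_)
    push_cast [Walk.length_cons]
    ring

end SimpleGraph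

open SimpleGraph in
theorem stmt4_general {V : Type*} (G : SimpleGraph V) (hconn : G.Connected)
    (K : ℕ) (γ : ℕ → V)
    (π : V → ℕ) (C : ℝ) (hC : 0 ≤ C)
    (hretr : ∀ k ≤ K, ∀ i ∈ Set.uIcc k (π (γ k)), ∀ j ∈ Set.uIcc k (π (γ k)),
      (G.dist (γ i) (γ j) : ℝ) ≤ C)
    (hLip : ∀ v w : V, G.dist v w ≤ 1 →
      ∀ i ∈ Set.uIcc (π v) (π w), ∀ j ∈ Set.uIcc (π v) (π w),
        (G.dist (γ i) (γ j) : ℝ) ≤ C) :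
    ∀ v : V, ∀ k ≤ K, ∀ i ∈ Set.uIcc (π v) k, ∀ j ∈ Set.uIcc (π v) k,
      (G.dist (γ i) (γ j) : ℝ) ≤ C * ((G.dist v (γ k) : ℝ) + 1) + C := by
  intro v k hk
  obtain ⟨p, hp⟩ := hconn.exists_walk_length_eq_dist v (γ k)
  have hwalk : G.SubpathDiamLE γ (π v) (π (γ k)) (G.dist v (γ k) * C) :=
    hp ▸ p.subpathDiamLE_length_mul hconn fun u w hadj =>
      hLip u w (dist_eq_one_iff_adj.mpr hadj).le
  have hproj : G.SubpathDiamLE γ (π (γ k)) k C := SubpathDiamLE.symm (hretr k hk)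
  exact (hwalk.trans hconn hproj).mono (by nlinarith)

/-- if a projection `π` to a path `γ` (steps of length ≤ 2) in a connected
graph is `C`-coarsely retracting and `C`-coarsely Lipschitz, then for every vertex `v`
and index `k` in the domain of `γ`, the diameter of `γ([π v, k])` is at most
`C·(d(v, γ k) + 1) + C`. -/
theorem stmt4 {V : Type*} (G : SimpleGraph V) (hconn : G.Connected)
    (K : ℕ) (γ : ℕ → V) (hγ : ∀ i < K, G.dist (γ i) (γ (i + 1)) ≤ 2)
    (π : V → ℕ) (hπ : ∀ v, π v ≤ K) (C : ℝ) (hC : 0 ≤ C)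
    (hretr : ∀ k ≤ K, ∀ i ∈ Set.uIcc k (π (γ k)), ∀ j ∈ Set.uIcc k (π (γ k)),
      (G.dist (γ i) (γ j) : ℝ) ≤ C)
    (hLip : ∀ v w : V, G.dist v w ≤ 1 →
      ∀ i ∈ Set.uIcc (π v) (π w), ∀ j ∈ Set.uIcc (π v) (π w),
        (G.dist (γ i) (γ j) : ℝ) ≤ C) :
    ∀ v : V, ∀ k ≤ K, ∀ i ∈ Set.uIcc (π v) k, ∀ j ∈ Set.uIcc (π v) k,
      (G.dist (γ i) (γ j) : ℝ) ≤ C * ((G.dist v (γ k) : ℝ) + 1) + C :=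
  stmt4_general G hconn K γ π C hC hretr hLip
end

section
/- Every geodesic in the sphere graph between two sphere systems S and S' is, after possibly deleting up to 4 edges at its extremities and reorganizing, a zig-zag path; consequently there exists a zig-zag path from S to S' of length at most d(S,S') + 4. -/
/-! Adjacent vertices of the comparability graph are comparable, while in a geodesic
`v₀ v₁ … v_d` the vertices `vᵢ` and `vᵢ₊₂` are incomparable: otherwise they would be equal
or adjacent and the geodesic could be shortened. Hence two consecutive steps never go the
same way (transitivity would make `vᵢ` and `vᵢ₊₂` comparable), so a geodesic already alternates.
If it starts with an upward step, prepending a constant step fixes the parity, giving a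
zig-zag path of length at most `d(S, S') + 1`. -/

namespace SimpleGraph.Walk

variable {V : Type*} {G : SimpleGraph V} {u v : V}

theorem sub_le_length_of_length_eq_dist {p : G.Walk u v} (hp : p.length = G.dist u v)
    {i j : ℕ} (hj : j ≤ p.length) (q : G.Walk (p.getVert i) (p.getVert j)) :
    j - i ≤ q.length := by
  have := dist_le ((p.take i).append (q.append (p.drop j)))
  simp only [length_append, take_length, drop_length] at this
  omega

variable [Preorder V] (hG : ∀ v w : V, G.Adj v w ↔ v ≠ w ∧ (v ≤ w ∨ w ≤ v))
include hG

theorem symmGen_getVert_succ (p : G.Walk u v) {i : ℕ} (hi : i < p.length) :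
    Relation.SymmGen (· ≤ ·) (p.getVert i) (p.getVert (i + 1)) :=
  ((hG _ _).1 (p.adj_getVert_succ hi)).2

theorem incompRel_getVert_add_two {p : G.Walk u v} (hp : p.length = G.dist u v) {i : ℕ}
    (hi : i + 2 ≤ p.length) : IncompRel (· ≤ ·) (p.getVert i) (p.getVert (i + 2)) := by
  rw [← not_symmGen_iff]
  intro hcomp
  by_cases heq : p.getVert i = p.getVert (i + 2)
  · have := sub_le_length_of_length_eq_dist hp hi (Walk.nil.copy rfl heq)
    simp at this
  · have hadj : G.Adj (p.getVert i) (p.getVert (i + 2)) := (hG _ _).2 ⟨heq, hcomp⟩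
    have := sub_le_length_of_length_eq_dist hp hi hadj.toWalk
    simp at this

end SimpleGraph.Walk

theorem zigzag_of_incompRel_add_two {V : Type*} [Preorder V] {γ : ℕ → V} {N : ℕ} (k : ℕ)
    (hstep : ∀ i < N, Relation.SymmGen (· ≤ ·) (γ i) (γ (i + 1)))
    (hskip : ∀ i, i + 2 ≤ N → IncompRel (· ≤ ·) (γ i) (γ (i + 2)))
    (hfirst : 0 < N → if k % 2 = 0 then γ 1 ≤ γ 0 else γ 0 ≤ γ 1) :
    ∀ i < N, if (i + k) % 2 = 0 then γ (i + 1) ≤ γ i else γ i ≤ γ (i + 1) := by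
  intro i hi
  induction i with
  | zero => simpa using hfirst hi
  | succ i ih =>
    have hprev := ih (by omega)
    have hinc := hskip i (by omega)
    rcases Nat.mod_two_eq_zero_or_one (i + k) with hpar | hpar
    · rw [if_pos hpar] at hprev
      rw [if_neg (by omega)]
      exact (hstep (i + 1) hi).resolve_right fun h => hinc.not_ge (h.trans hprev)
    · rw [if_neg (by omega)] at hprev
      rw [if_pos (by omega)]
      exact (hstep (i + 1) hi).resolve_left fun h => hinc.not_le (hprev.trans h)

/-- in the connected comparability graph of a partial order (which has the
chain-shortcut property: comparable distinct vertices are adjacent), any two vertices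
`S, S'` are joined by a zig-zag path (alternating `⊇` and `⊆` steps, equalities allowed)
of length at most `d(S,S') + 4`. -/
theorem stmt14 {V : Type*} [PartialOrder V] (G : SimpleGraph V)
    (hG : ∀ v w : V, G.Adj v w ↔ v ≠ w ∧ (v ≤ w ∨ w ≤ v))
    (hconn : G.Connected) (S S' : V) :
    ∃ (N : ℕ) (γ : ℕ → V), N ≤ G.dist S S' + 4 ∧ γ 0 = S ∧ γ N = S' ∧
      ∀ i < N, if i % 2 = 0 then γ (i + 1) ≤ γ i else γ i ≤ γ (i + 1) := by
  obtain ⟨p, hp⟩ := hconn.exists_walk_length_eq_dist S S'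
  have hstep := fun i => p.symmGen_getVert_succ hG (i := i)
  have hskip := fun i => p.incompRel_getVert_add_two hG hp (i := i)
  by_cases hdown : 0 < p.length → p.getVert 1 ≤ p.getVert 0
  · refine ⟨p.length, p.getVert, by omega, p.getVert_zero, p.getVert_length, ?_⟩
    simpa using zigzag_of_incompRel_add_two 0 hstep hskip (by simpa using hdown)
  · -- `i - 1` truncates at `0`, so the new sequence starts with the constant step `S, S`
    push Not at hdown
    have hup := (hstep 0 hdown.1).resolve_right hdown.2
    refine ⟨p.length + 1, fun i => p.getVert (i - 1), by omega, p.getVert_zero, by simp, ?_⟩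
    rintro (_ | i) hi
    · simp
    · exact zigzag_of_incompRel_add_two 1 hstep hskip (fun _ => by simpa using hup) i (by omega)
end

section
/- Let X and Y be connected graphs and τ : X → Y a map that is surjective on vertices and 1-Lipschitz (adjacent vertices map to equal or adjacent vertices). If X is Gromov hyperbolic and the fibers of τ are quasi-convex in the sense of Kapovich–Rafi (for any two vertices S, S' of X with τ(S) and τ(S') sharing a common value/structure, some path in X from S to S' projects to a set of uniformly bounded diameter), then Y is Gromov hyperbolic. -/
/-- Gromov hyperbolicity of a graph via the four-point condition on the graph metric. -/
def GraphHyperbolic {V : Type*} (G : SimpleGraph V) : Prop :=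
  ∃ δ : ℝ, 0 ≤ δ ∧ ∀ x y z w : V,
    (G.dist x y : ℝ) + G.dist z w ≤
      max ((G.dist x z : ℝ) + G.dist y w) ((G.dist x w : ℝ) + G.dist y z) + 2 * δ

/-!
Pick a geodesic of `X` between lifts of any two vertices of `Y` and push it forward by `τ`:
this yields a family of discrete paths `η y y'` in `Y` with unit steps, bounded when
`d(y, y') ≤ 1` (the fibre hypothesis), and forming `2δ`-slim triangles (geodesic triangles in
`X` are `2δ`-slim and `τ` is 1-Lipschitz). Bowditch's "guessing geodesics" criterion turns such
a family into hyperbolicity of `Y`. Halving a path `W` repeatedly and using slimness shows that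
`η y y'` lies within `C + Δ log₂ |W|` of any walk `W` from `y` to `y'`. For a geodesic `g` and a
point `z` of `η y y'` at distance `r` from `g`, apply slimness at the points of `g` at distance
`r + O(1)` on either side of a closest point: by induction on the length of `g` the two outer
pieces cannot carry `z`, so `r ≤ C + 2Δ + Δ log₂ (2r + O(1))` and `r` is uniformly bounded. Hence
every point of `η y y'` lies almost between `y` and `y'`, and the point where `η x y` passes
from near `η x z` to near `η z y` realises the Gromov product `(x | y)_z`; slimness then gives
the four-point condition.
-/

open Filter

theorem eventually_add_mul_le_two_pow (a b : ℕ) : ∀ᶠ k in atTop, a + b * k ≤ 2 ^ k := by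
  have h := ((isLittleO_pow_const_const_pow_of_one_lt (R := ℝ) 0 one_lt_two).const_mul_left
    (a : ℝ)).add ((isLittleO_pow_const_const_pow_of_one_lt (R := ℝ) 1 one_lt_two).const_mul_left
    (b : ℝ))
  filter_upwards [h.bound one_pos] with k hk
  rw [one_mul, Real.norm_of_nonneg (by positivity), Real.norm_of_nonneg (by positivity)] at hk
  exact_mod_cast (by simpa using hk : (a : ℝ) + b * k ≤ 2 ^ k)

theorem exists_forall_le_of_le_add_mul_clog (a b c : ℕ) :
    ∃ M, ∀ r, r ≤ a + b * Nat.clog 2 (2 * (r + M + c)) → r ≤ M := by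
  obtain ⟨K, hK⟩ :=
    (eventually_add_mul_le_two_pow (8 * a + 4 * c) (8 * b)).exists_forall_of_atTop
  refine ⟨a + b * K, fun r hr => ?_⟩
  by_contra! hrM
  set k := Nat.clog 2 (2 * (r + (a + b * K) + c))
  have hk : 2 ^ k < 4 * (r + (a + b * K) + c) := by
    have h₁ : 2 ^ (k - 1) < 2 * (r + (a + b * K) + c) :=
      Nat.pow_pred_clog_lt_self one_lt_two (by omega)
    have h₂ : 2 ^ k ≤ 2 * 2 ^ (k - 1) := by
      rw [← pow_succ']
      exact Nat.pow_le_pow_right two_pos (by omega)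
    omega
  rcases lt_or_ge k K with hkK | hkK
  · have := Nat.mul_le_mul_left b hkK.le
    omega
  · have := hK k hkK
    rw [mul_assoc] at this
    omega

theorem exists_and_or_succ {p q : ℕ → Prop} (h₀ : p 0) (hq : ∃ n, q n)
    (hpq : ∀ n, p n ∨ q n) : ∃ n, p n ∧ (q n ∨ q (n + 1)) := by
  classical
  rcases h : Nat.find hq with _ | m
  · exact ⟨0, h₀, .inl (h ▸ Nat.find_spec hq)⟩
  · exact ⟨m, (hpq m).resolve_right (Nat.find_min hq (by omega)), .inr (h ▸ Nat.find_spec hq)⟩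

namespace SimpleGraph

variable {V : Type*} {G : SimpleGraph V}

def FourPointCondition (G : SimpleGraph V) (δ : ℕ) : Prop :=
  ∀ x y z w : V, G.dist x y + G.dist z w ≤ G.dist x z + G.dist y w + δ ∨
    G.dist x y + G.dist z w ≤ G.dist x w + G.dist y z + δ

theorem graphHyperbolic_iff_exists_fourPointCondition :
    GraphHyperbolic G ↔ ∃ δ, G.FourPointCondition δ := by
  constructor
  · rintro ⟨δ, -, h⟩
    refine ⟨⌈2 * δ⌉₊, fun x y z w => ?_⟩
    have hδ : 2 * δ ≤ ⌈2 * δ⌉₊ := Nat.le_ceil _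
    rcases le_max_iff.1 ((h x y z w).trans_eq (max_add_add_right _ _ _).symm) with h | h
    · left; exact_mod_cast h.trans (add_le_add_right hδ _)
    · right; exact_mod_cast h.trans (add_le_add_right hδ _)
  · rintro ⟨δ, h⟩
    refine ⟨δ / 2, by positivity, fun x y z w => ?_⟩
    rw [mul_div_cancel₀ _ two_ne_zero, ← max_add_add_right]
    rcases h x y z w with h | h
    · exact le_max_of_le_left (by exact_mod_cast h)
    · exact le_max_of_le_right (by exact_mod_cast h)

theorem Walk.dist_le_length_of_adj_imp {W : Type*} {H : SimpleGraph W} {f : V → W}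
    (hf : ∀ a b, G.Adj a b → f a = f b ∨ H.Adj (f a) (f b)) {u v : V} (p : G.Walk u v) :
    H.dist (f u) (f v) ≤ p.length := by
  induction p with
  | nil => simp
  | @cons u v w h p ih =>
    rw [length_cons]
    rcases hf _ _ h with e | hadj
    · rw [e]
      omega
    · have := hadj.reachable.dist_triangle_left (f w)
      rw [dist_eq_one_iff_adj.2 hadj] at this
      omega

theorem Reachable.dist_le_of_adj_imp {W : Type*} {H : SimpleGraph W} {f : V → W}
    (hf : ∀ a b, G.Adj a b → f a = f b ∨ H.Adj (f a) (f b)) {u v : V} (h : G.Reachable u v) :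
    H.dist (f u) (f v) ≤ G.dist u v := by
  obtain ⟨p, hp⟩ := h.exists_walk_length_eq_dist
  exact hp ▸ p.dist_le_length_of_adj_imp hf

namespace Walk

def IsGeodesic {u v : V} (p : G.Walk u v) : Prop := p.length = G.dist u v

variable {u v : V} {p : G.Walk u v}

theorem getVert_min_length (p : G.Walk u v) (i : ℕ) :
    p.getVert (min i p.length) = p.getVert i := by
  rcases le_total i p.length with h | h
  · rw [min_eq_left h]
  · rw [min_eq_right h, getVert_length, getVert_of_length_le p h]

theorem IsGeodesic.take (hp : p.IsGeodesic) (n : ℕ) : (p.take n).IsGeodesic :=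
  length_eq_dist_of_subwalk hp (isSubwalk_take p n)

theorem IsGeodesic.drop (hp : p.IsGeodesic) (n : ℕ) : (p.drop n).IsGeodesic :=
  length_eq_dist_of_subwalk hp (isSubwalk_drop p n)

-- `getVert` is constant past the end of the walk, hence the `min`s.
theorem IsGeodesic.dist_getVert_getVert (hp : p.IsGeodesic) {i j : ℕ} (hij : i ≤ j) :
    G.dist (p.getVert i) (p.getVert j) = min j p.length - min i p.length := by
  have h := length_eq_dist_of_subwalk hp ((isSubwalk_take _ (j - i)).trans (isSubwalk_drop p i))
  rw [take_length, drop_length, drop_getVert, Nat.add_sub_cancel' hij] at h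
  omega

theorem IsGeodesic.dist_start_getVert (hp : p.IsGeodesic) (i : ℕ) :
    G.dist u (p.getVert i) = min i p.length := by
  simpa using hp.dist_getVert_getVert (Nat.zero_le i)

theorem IsGeodesic.dist_getVert_end (hp : p.IsGeodesic) (i : ℕ) :
    G.dist (p.getVert i) v = p.length - i := by
  rcases le_total i p.length with h | h
  · simpa [getVert_length, h] using hp.dist_getVert_getVert h
  · simp [getVert_of_length_le p h, Nat.sub_eq_zero_of_le h]

theorem IsGeodesic.sub_le_dist_add_dist (hp : p.IsGeodesic) (hG : G.Connected) {i j : ℕ}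
    (hij : i ≤ j) (z : V) :
    min j p.length - min i p.length ≤ G.dist z (p.getVert i) + G.dist z (p.getVert j) := by
  rw [← hp.dist_getVert_getVert hij, dist_comm (u := z)]
  exact hG.dist_triangle

end Walk

theorem FourPointCondition.dist_le_of_dist_eq {δ : ℕ} (hG : G.FourPointCondition δ)
    {a b c u v : V} {t : ℕ} (hau : G.dist a u = t) (hub : G.dist u b + t = G.dist a b)
    (hav : G.dist a v = t) (hvc : G.dist v c + t = G.dist a c)
    (ht : 2 * t + G.dist b c ≤ G.dist a b + G.dist a c) : G.dist u v ≤ 2 * δ := by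
  have hbv := hG b v c a
  have huv := hG u v b a
  simp only [dist_comm (u := c) (v := a), dist_comm (u := v) (v := a),
    dist_comm (u := b) (v := a), dist_comm (u := u) (v := a), dist_comm (u := v) (v := b)]
    at hbv huv
  omega

theorem FourPointCondition.exists_dist_getVert_le {δ : ℕ} (hG : G.FourPointCondition δ)
    {a b c : V} {p : G.Walk a b} {q : G.Walk a c} {r : G.Walk c b} (hp : p.IsGeodesic)
    (hq : q.IsGeodesic) (hr : r.IsGeodesic) (i : ℕ) : ∃ j,
      G.dist (p.getVert i) (q.getVert j) ≤ 2 * δ ∨ G.dist (p.getVert i) (r.getVert j) ≤ 2 * δ := by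
  have htri : G.dist a b ≤ G.dist a c + G.dist c b := q.reachable.dist_triangle_left b
  have hau := hp.dist_start_getVert i
  have hub := hp.dist_getVert_end i
  rw [hp] at hau hub
  set t := min i (G.dist a b)
  -- `t ≤ (b | c)_a`: compare with the point of `q` at distance `t` from `a`; otherwise compare
  -- with the point of `r` at the same distance from `b` as `p.getVert i`.
  by_cases ht : 2 * t + G.dist c b ≤ G.dist a b + G.dist a c
  · have hav := hq.dist_start_getVert t
    have hvc := hq.dist_getVert_end t
    rw [hq] at hav hvc
    exact ⟨t, .inl (hG.dist_le_of_dist_eq (b := b) (c := c) hau (by omega) (by omega)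
      (by omega) (by rwa [dist_comm]))⟩
  · set s := G.dist a b - t
    have hcv := hr.dist_start_getVert (G.dist c b - s)
    have hvb := hr.dist_getVert_end (G.dist c b - s)
    rw [hr] at hcv hvb
    have hba : G.dist b a = G.dist a b := dist_comm
    have hbc : G.dist b c = G.dist c b := dist_comm
    refine ⟨G.dist c b - s, .inr (hG.dist_le_of_dist_eq (a := b) (b := a) (c := c) (t := s)
      ?_ ?_ ?_ ?_ (by omega))⟩
    · rw [dist_comm]; omega
    · rw [dist_comm]; omega
    · rw [dist_comm]; omega
    · rw [dist_comm]; omega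

/-- Bowditch's conditions on a family of discrete paths `η y y' : ℕ → V` from `y` to `y'`. -/
structure GuessedGeodesics (G : SimpleGraph V) (η : V → V → ℕ → V) (C Δ : ℕ) : Prop where
  start : ∀ y y', η y y' 0 = y
  reach : ∀ y y', ∃ n, η y y' n = y'
  step : ∀ y y' n, G.dist (η y y' n) (η y y' (n + 1)) ≤ 1
  short : ∀ y y', G.dist y y' ≤ 1 → ∀ n, G.dist (η y y' n) y ≤ C
  slim : ∀ y₁ y₂ y₃ n,
    (∃ m, G.dist (η y₁ y₂ n) (η y₁ y₃ m) ≤ Δ) ∨ ∃ m, G.dist (η y₁ y₂ n) (η y₃ y₂ m) ≤ Δ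

def NearGeodesics (G : SimpleGraph V) (η : V → V → ℕ → V) (M L : ℕ) : Prop :=
  ∀ ⦃x x' : V⦄ (q : G.Walk x x'), q.IsGeodesic → q.length < L →
    ∀ j, ∃ i, G.dist (η x x' j) (q.getVert i) ≤ M

namespace GuessedGeodesics

variable {η : V → V → ℕ → V} {C Δ : ℕ}

theorem exists_dist_getVert_le_of_length_le_two_pow (hG : G.Connected)
    (hη : G.GuessedGeodesics η C Δ) (k : ℕ) :
    ∀ {y y' : V} (W : G.Walk y y'), W.length ≤ 2 ^ k →
      ∀ n, ∃ i, G.dist (η y y' n) (W.getVert i) ≤ C + Δ * k := by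
  induction k with
  | zero =>
    intro y y' W hW n
    exact ⟨0, by simpa using hη.short y y' ((dist_le W).trans (by simpa using hW)) n⟩
  | succ k ih =>
    intro y y' W hW n
    rw [pow_succ] at hW
    rw [mul_add_one]
    obtain ⟨m, hm⟩ | ⟨m, hm⟩ := hη.slim y y' (W.getVert (2 ^ k)) n
    · obtain ⟨i, hi⟩ := ih (W.take (2 ^ k)) (by simp) m
      rw [Walk.take_getVert] at hi
      have := hG.dist_triangle (u := η y y' n) (v := η y (W.getVert (2 ^ k)) m)
        (w := W.getVert (2 ^ k ⊓ i))
      exact ⟨2 ^ k ⊓ i, by omega⟩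
    · obtain ⟨i, hi⟩ := ih (W.drop (2 ^ k)) (by simp; omega) m
      rw [Walk.drop_getVert] at hi
      have := hG.dist_triangle (u := η y y' n) (v := η (W.getVert (2 ^ k)) y' m)
        (w := W.getVert (2 ^ k + i))
      exact ⟨2 ^ k + i, by omega⟩

theorem exists_dist_getVert_le_clog (hG : G.Connected) (hη : G.GuessedGeodesics η C Δ)
    {y y' : V} (W : G.Walk y y') {a b : ℕ} (hab : a ≤ b) (m : ℕ) : ∃ k,
      G.dist (η (W.getVert a) (W.getVert b) m) (W.getVert k) ≤ C + Δ * Nat.clog 2 (b - a) := by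
  let q := ((W.drop a).take (b - a)).copy rfl
    (by rw [Walk.drop_getVert, Nat.add_sub_cancel' hab])
  obtain ⟨i, hi⟩ := hη.exists_dist_getVert_le_of_length_le_two_pow hG _ q
    ((by simp [q] : q.length ≤ b - a).trans (Nat.le_pow_clog one_lt_two _)) m
  exact ⟨a + (b - a) ⊓ i, by simpa [q] using hi⟩

variable {M : ℕ} {y y' z : V} {g : G.Walk y y'}

theorem dist_closest_le_of_near_start (hG : G.Connected) (hη : G.GuessedGeodesics η C Δ)
    (hg : g.IsGeodesic) (hM : G.NearGeodesics η M g.length) {t S D m : ℕ} (ht : t ≤ g.length)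
    (hmin : ∀ i, G.dist z (g.getVert t) ≤ G.dist z (g.getVert i))
    (hS : G.dist z (g.getVert t) + D + M < S)
    (hz : G.dist z (η y (g.getVert (t - S)) m) ≤ D) :
    G.dist z (g.getVert t) ≤ C + D := by
  rcases Nat.eq_zero_or_pos (t - S) with h0 | hpos
  · rw [h0, Walk.getVert_zero] at hz
    have := hmin 0
    rw [Walk.getVert_zero] at this
    have := hη.short y y (by simp) m
    have := hG.dist_triangle (u := z) (v := η y y m) (w := y)
    omega
  · obtain ⟨i, hi⟩ := hM (g.take (t - S)) (hg.take _) (by simp; omega) m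
    rw [Walk.take_getVert] at hi
    have := hg.sub_le_dist_add_dist hG (i := (t - S) ⊓ i) (j := t) (by omega) z
    have := hG.dist_triangle (u := z) (v := η y (g.getVert (t - S)) m)
      (w := g.getVert ((t - S) ⊓ i))
    omega

theorem dist_closest_le_of_near_end (hG : G.Connected) (hη : G.GuessedGeodesics η C Δ)
    (hg : g.IsGeodesic) (hM : G.NearGeodesics η M g.length) {t S D m : ℕ}
    (hmin : ∀ i, G.dist z (g.getVert t) ≤ G.dist z (g.getVert i))
    (hS : G.dist z (g.getVert t) + D + M < S)
    (hz : G.dist z (η (g.getVert (t + S)) y' m) ≤ D) :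
    G.dist z (g.getVert t) ≤ C + D := by
  by_cases hend : g.length ≤ t + S
  · rw [Walk.getVert_of_length_le g hend] at hz
    have := hmin g.length
    rw [Walk.getVert_length] at this
    have := hη.short y' y' (by simp) m
    have := hG.dist_triangle (u := z) (v := η y' y' m) (w := y')
    omega
  · obtain ⟨i, hi⟩ := hM (g.drop (t + S)) (hg.drop _) (by simp; omega) m
    rw [Walk.drop_getVert] at hi
    have := hg.sub_le_dist_add_dist hG (i := t) (j := t + S + i) (by omega) z
    have := hG.dist_triangle (u := z) (v := η (g.getVert (t + S)) y' m)
      (w := g.getVert (t + S + i))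
    omega

theorem dist_closest_le (hG : G.Connected) (hη : G.GuessedGeodesics η C Δ)
    (hg : g.IsGeodesic) (hM : G.NearGeodesics η M g.length) {n t S : ℕ} (ht : t ≤ g.length)
    (hmin : ∀ i, G.dist (η y y' n) (g.getVert t) ≤ G.dist (η y y' n) (g.getVert i))
    (hS : G.dist (η y y' n) (g.getVert t) + 2 * Δ + M < S) :
    G.dist (η y y' n) (g.getVert t) ≤ C + 2 * Δ + Δ * Nat.clog 2 (2 * S) := by
  obtain ⟨m, h₁⟩ | ⟨m, h₁⟩ := hη.slim y y' (g.getVert (t - S)) n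
  · have := dist_closest_le_of_near_start hG hη hg hM ht hmin (by omega) h₁
    omega
  obtain ⟨m', h₂⟩ | ⟨m', h₂⟩ := hη.slim (g.getVert (t - S)) y' (g.getVert (t + S)) m
  · obtain ⟨k, hk⟩ := hη.exists_dist_getVert_le_clog hG g (a := t - S) (b := t + S)
      (by omega) m'
    have := Nat.mul_le_mul_left Δ (Nat.clog_mono_right 2 (by omega : t + S - (t - S) ≤ 2 * S))
    have := hmin k
    have := hG.dist_triangle (u := η y y' n) (v := η (g.getVert (t - S)) y' m)
      (w := g.getVert k)
    have := hG.dist_triangle (u := η (g.getVert (t - S)) y' m)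
      (v := η (g.getVert (t - S)) (g.getVert (t + S)) m') (w := g.getVert k)
    omega
  · have := hG.dist_triangle (u := η y y' n) (v := η (g.getVert (t - S)) y' m)
      (w := η (g.getVert (t + S)) y' m')
    have := dist_closest_le_of_near_end hG hη hg hM hmin (D := 2 * Δ) (m := m') (by omega)
      (by omega)
    omega

theorem exists_nearGeodesics (hG : G.Connected) (hη : G.GuessedGeodesics η C Δ) :
    ∃ M, ∀ L, G.NearGeodesics η M L := by
  obtain ⟨M, hM⟩ := exists_forall_le_of_le_add_mul_clog (C + 2 * Δ) Δ (2 * Δ + 1)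
  refine ⟨M, fun L => ?_⟩
  induction L with
  | zero => exact fun _ _ _ _ h => absurd h (Nat.not_lt_zero _)
  | succ L ih =>
    intro y y' g hg hL n
    obtain ⟨t, ht, hmin⟩ : ∃ t ≤ g.length,
        ∀ i, G.dist (η y y' n) (g.getVert t) ≤ G.dist (η y y' n) (g.getVert i) := by
      let f i := G.dist (η y y' n) (g.getVert i)
      refine ⟨min (Function.argmin f) g.length, min_le_right _ _, fun i => ?_⟩
      rw [Walk.getVert_min_length]
      exact Function.argmin_le f i
    exact ⟨t, hM _ <| dist_closest_le hG hη hg (fun _ _ q hq hlt => ih q hq (by omega)) ht hmin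
      (S := G.dist (η y y' n) (g.getVert t) + M + (2 * Δ + 1)) (by omega)⟩

theorem exists_forall_dist_add_dist_le (hG : G.Connected) (hη : G.GuessedGeodesics η C Δ) :
    ∃ K, ∀ x y n, G.dist x (η x y n) + G.dist (η x y n) y ≤ G.dist x y + K := by
  obtain ⟨M, hM⟩ := hη.exists_nearGeodesics hG
  refine ⟨2 * M, fun x y n => ?_⟩
  obtain ⟨g, hg⟩ : ∃ g : G.Walk x y, g.IsGeodesic := hG.exists_walk_length_eq_dist x y
  obtain ⟨i, hi⟩ := hM (g.length + 1) g hg (Nat.lt_succ_self _) n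
  have h₁ := hg.dist_start_getVert i
  have h₂ := hg.dist_getVert_end i
  rw [hg] at h₁ h₂
  have := hG.dist_triangle (u := x) (v := g.getVert i) (w := η x y n)
  have := hG.dist_triangle (u := η x y n) (v := g.getVert i) (w := y)
  have : G.dist (g.getVert i) (η x y n) = G.dist (η x y n) (g.getVert i) := dist_comm
  omega

theorem exists_two_mul_dist_add_dist_le (hG : G.Connected) (hη : G.GuessedGeodesics η C Δ)
    {K : ℕ} (hK : ∀ x y n, G.dist x (η x y n) + G.dist (η x y n) y ≤ G.dist x y + K)
    (x y z : V) : ∃ n,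
      2 * G.dist z (η x y n) + G.dist x y ≤ G.dist x z + G.dist z y + (2 * K + 4 * Δ + 4) := by
  have key : ∀ a j₁ j₂, G.dist a (η x z j₁) ≤ Δ + 1 → G.dist a (η z y j₂) ≤ Δ + 1 →
      2 * G.dist z a + G.dist x y ≤ G.dist x z + G.dist z y + (2 * K + 4 * Δ + 4) := by
    intro a j₁ j₂ h₁ h₂
    have := hK x z j₁
    have := hK z y j₂
    have := hG.dist_triangle (u := z) (v := η x z j₁) (w := a)
    have := hG.dist_triangle (u := z) (v := η z y j₂) (w := a)
    have := hG.dist_triangle (u := x) (v := η x z j₁) (w := a)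
    have := hG.dist_triangle (u := x) (v := a) (w := y)
    have := hG.dist_triangle (u := a) (v := η z y j₂) (w := y)
    have : G.dist (η x z j₁) a = G.dist a (η x z j₁) := dist_comm
    have : G.dist (η z y j₂) a = G.dist a (η z y j₂) := dist_comm
    have : G.dist (η x z j₁) z = G.dist z (η x z j₁) := dist_comm
    omega
  obtain ⟨n, ⟨j₁, h₁⟩, ⟨j₂, h₂⟩ | ⟨j₂, h₂⟩⟩ := exists_and_or_succ
    (p := fun n => ∃ j, G.dist (η x y n) (η x z j) ≤ Δ)
    (q := fun n => ∃ j, G.dist (η x y n) (η z y j) ≤ Δ)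
    ⟨0, by simp [hη.start]⟩
    (by
      obtain ⟨n, hn⟩ := hη.reach x y
      obtain ⟨j, hj⟩ := hη.reach z y
      exact ⟨n, j, by simp [hn, hj]⟩)
    (hη.slim x y z)
  · exact ⟨n, key _ j₁ j₂ (by omega) (by omega)⟩
  · have := hη.step x y n
    have := hG.dist_triangle (u := η x y (n + 1)) (v := η x y n) (w := η x z j₁)
    have : G.dist (η x y (n + 1)) (η x y n) = G.dist (η x y n) (η x y (n + 1)) := dist_comm
    exact ⟨n + 1, key _ j₁ j₂ (by omega) (by omega)⟩

theorem fourPointCondition (hG : G.Connected) (hη : G.GuessedGeodesics η C Δ)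
    {K : ℕ} (hK : ∀ x y n, G.dist x (η x y n) + G.dist (η x y n) y ≤ G.dist x y + K) :
    G.FourPointCondition (3 * K + 6 * Δ + 4) := by
  intro x y z w
  obtain ⟨n, hn⟩ := hη.exists_two_mul_dist_add_dist_le hG hK x y z
  have : G.dist z y = G.dist y z := dist_comm
  obtain ⟨m, hm⟩ | ⟨m, hm⟩ := hη.slim x y w n
  · have := hK x w m
    have := hG.dist_triangle (u := z) (v := η x y n) (w := η x w m)
    have := hG.dist_triangle (u := z) (v := η x w m) (w := x)
    have := hG.dist_triangle (u := z) (v := η x w m) (w := w)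
    have : G.dist z x = G.dist x z := dist_comm
    have : G.dist (η x w m) x = G.dist x (η x w m) := dist_comm
    omega
  · have := hK w y m
    have := hG.dist_triangle (u := z) (v := η x y n) (w := η w y m)
    have := hG.dist_triangle (u := z) (v := η w y m) (w := w)
    have := hG.dist_triangle (u := z) (v := η w y m) (w := y)
    have : G.dist w y = G.dist y w := dist_comm
    have : G.dist (η w y m) w = G.dist w (η w y m) := dist_comm
    omega

theorem graphHyperbolic (hG : G.Connected) (hη : G.GuessedGeodesics η C Δ) :
    GraphHyperbolic G :=
  have ⟨_, hK⟩ := hη.exists_forall_dist_add_dist_le hG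
  graphHyperbolic_iff_exists_fourPointCondition.2 ⟨_, hη.fourPointCondition hG hK⟩

end GuessedGeodesics

theorem FourPointCondition.guessedGeodesics {VX VY : Type*} {X : SimpleGraph VX}
    {Y : SimpleGraph VY} (hX : X.Connected) {δ : ℕ} (hδ : X.FourPointCondition δ)
    {τ : VX → VY} (hlip : ∀ a b : VX, X.Adj a b → τ a = τ b ∨ Y.Adj (τ a) (τ b)) {C : ℕ}
    (hfib : ∀ a b : VX, Y.dist (τ a) (τ b) ≤ 1 → ∀ p : X.Walk a b,
      p.length = X.dist a b → ∀ u ∈ p.support, ∀ v ∈ p.support, Y.dist (τ u) (τ v) ≤ C)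
    {σ : VY → VX} (hσ : Function.RightInverse σ τ) {geo : ∀ a b : VX, X.Walk a b}
    (hgeo : ∀ a b, (geo a b).IsGeodesic) :
    Y.GuessedGeodesics (fun y y' n => τ ((geo (σ y) (σ y')).getVert n)) C (2 * δ) where
  start y y' := by simp [hσ y]
  reach y y' := ⟨(geo (σ y) (σ y')).length, by simp [hσ y']⟩
  step y y' n := by
    have := (hgeo (σ y) (σ y')).dist_getVert_getVert (Nat.le_add_right n 1)
    exact (hX.preconnected _ _ |>.dist_le_of_adj_imp hlip).trans (by omega)
  short y y' h n := by
    simpa [hσ y] using hfib (σ y) (σ y') (by simpa [hσ y, hσ y'] using h) _ (hgeo _ _) _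
      (Walk.getVert_mem_support _ n) _ (Walk.start_mem_support _)
  slim y₁ y₂ y₃ n := by
    obtain ⟨j, h | h⟩ := hδ.exists_dist_getVert_le (hgeo (σ y₁) (σ y₂)) (hgeo (σ y₁) (σ y₃))
      (hgeo (σ y₃) (σ y₂)) n
    · exact .inl ⟨j, (hX.preconnected _ _ |>.dist_le_of_adj_imp hlip).trans h⟩
    · exact .inr ⟨j, (hX.preconnected _ _ |>.dist_le_of_adj_imp hlip).trans h⟩

end SimpleGraph

/-- Kapovich–Rafi criterion: let `τ` be a surjective Lipschitz map between
connected graphs `X` and `Y` such that for any two vertices of `X` whose images are at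
distance at most 1, every geodesic between them has `τ`-image of diameter at most a
uniform constant `C`. If `X` is Gromov hyperbolic, then so is `Y`. -/
theorem stmt17 {VX VY : Type*} (X : SimpleGraph VX) (Y : SimpleGraph VY)
    (hX : X.Connected) (hY : Y.Connected)
    (τ : VX → VY) (hsurj : Function.Surjective τ)
    (hlip : ∀ a b : VX, X.Adj a b → τ a = τ b ∨ Y.Adj (τ a) (τ b))
    (C : ℕ)
    (hfib : ∀ a b : VX, Y.dist (τ a) (τ b) ≤ 1 → ∀ p : X.Walk a b,
      p.length = X.dist a b → ∀ u ∈ p.support, ∀ v ∈ p.support,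
        Y.dist (τ u) (τ v) ≤ C)
    (hhyp : GraphHyperbolic X) : GraphHyperbolic Y := by
  obtain ⟨δ, hδ⟩ := SimpleGraph.graphHyperbolic_iff_exists_fourPointCondition.1 hhyp
  choose geo hgeo using hX.exists_walk_length_eq_dist
  have hη := hδ.guessedGeodesics hX hlip hfib (Function.rightInverse_surjInv hsurj) hgeo
  exact hη.graphHyperbolic hY
end
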